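/- arXiv:2010.05288 — 2 statements merged into one kernel-verified Lean document; each statement's English description precedes it below -/
import Mathlib

section
/- Let (Ω, 𝓕, ℙ) be a probability space and let g : ℝ → ℝ be differentiable with Lipschitz continuous derivative g′. Then the lifted functional Φ̃ : L²(Ω, ℙ; ℝ) → ℝ defined by Φ̃(ϑ) = 𝔼[g(ϑ)] is well defined (g(ϑ) is integrable for every ϑ ∈ L²) and Fréchet differentiable at every ϑ ∈ L²(Ω, ℙ; ℝ), with Fréchet derivative given by the continuous linear map v ↦ 𝔼[g′(ϑ) v]. -/
/-!
Since `g'` is `L`-Lipschitz, the mean value theorem applied to `z ↦ g z - g'(x) z` gives the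
Taylor bound `|g y - g x - g'(x) (y - x)| ≤ L (y - x)²`. Hence `g` grows at most quadratically,
so `g(ϑ)` is integrable for `ϑ ∈ L²`, and integrating the Taylor bound shows that
`Φ̃(ϑ + v) - Φ̃(ϑ) - 𝔼[g'(ϑ) v]` is at most `L ‖v‖²`, i.e. `o(‖v‖)`. The derivative is the inner
product with `g'(ϑ)`, which lies in `L²` because `g'` is Lipschitz and `ℙ` is finite.
-/

open MeasureTheory

theorem abs_sub_sub_deriv_mul_le_of_lipschitzWith_deriv {g : ℝ → ℝ} (hg : Differentiable ℝ g)
    {L : NNReal} (hlip : LipschitzWith L (deriv g)) (x y : ℝ) :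
    |g y - g x - deriv g x * (y - x)| ≤ L * (y - x) ^ 2 := by
  have hderiv : ∀ z ∈ Set.uIcc x y,
      HasDerivWithinAt (fun z => g z - deriv g x * z) (deriv g z - deriv g x) (Set.uIcc x y) z :=
    fun z _ => ((hg z).hasDerivAt.sub ((hasDerivAt_id z).const_mul _)).hasDerivWithinAt.congr_deriv
      (by simp)
  have hbound : ∀ z ∈ Set.uIcc x y, ‖deriv g z - deriv g x‖ ≤ L * |y - x| := fun z hz =>
    calc ‖deriv g z - deriv g x‖ ≤ L * |z - x| := by
          simpa only [Real.dist_eq, Real.norm_eq_abs] using hlip.dist_le_mul z x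
      _ ≤ L * |y - x| := mul_le_mul_of_nonneg_left (Set.abs_sub_left_of_mem_uIcc hz) L.2
  calc |g y - g x - deriv g x * (y - x)| = ‖(g y - deriv g x * y) - (g x - deriv g x * x)‖ := by
        rw [Real.norm_eq_abs]; ring_nf
    _ ≤ L * |y - x| * ‖y - x‖ := (convex_uIcc x y).norm_image_sub_le_of_norm_hasDerivWithin_le
        hderiv hbound Set.left_mem_uIcc Set.right_mem_uIcc
    _ = L * (y - x) ^ 2 := by rw [Real.norm_eq_abs, mul_assoc, abs_mul_abs_self, sq]

theorem abs_le_of_lipschitzWith_deriv {g : ℝ → ℝ} (hg : Differentiable ℝ g)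
    {L : NNReal} (hlip : LipschitzWith L (deriv g)) (x : ℝ) :
    |g x| ≤ |g 0| + |deriv g 0| * |x| + L * x ^ 2 := by
  have hrem := abs_sub_sub_deriv_mul_le_of_lipschitzWith_deriv hg hlip 0 x
  rw [sub_zero] at hrem
  calc |g x| = |g 0 + deriv g 0 * x + (g x - g 0 - deriv g 0 * x)| := by ring_nf
    _ ≤ |g 0| + |deriv g 0 * x| + |g x - g 0 - deriv g 0 * x| := abs_add_three _ _ _
    _ ≤ |g 0| + |deriv g 0| * |x| + L * x ^ 2 := by rw [abs_mul]; gcongr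

theorem hasFDerivAt_of_norm_sub_sub_le_mul_sq {E F : Type*} [NormedAddCommGroup E]
    [NormedSpace ℝ E] [NormedAddCommGroup F] [NormedSpace ℝ F] {f : E → F} {f' : E →L[ℝ] F}
    {x : E} (C : ℝ) (h : ∀ v, ‖f (x + v) - f x - f' v‖ ≤ C * ‖v‖ ^ 2) : HasFDerivAt f f' x := by
  rw [hasFDerivAt_iff_isLittleO_nhds_zero]
  refine (Asymptotics.IsBigO.of_bound C (.of_forall fun v => ?_)).trans_isLittleO
    (Asymptotics.isLittleO_norm_pow_id one_lt_two)
  simpa using h v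

section FiniteMeasure

variable {Ω : Type*} [MeasurableSpace Ω] {μ : Measure Ω} [IsFiniteMeasure μ]

theorem LipschitzWith.comp_memLp_of_isFiniteMeasure {E F : Type*} [NormedAddCommGroup E]
    [NormedAddCommGroup F] {p : ENNReal} {K : NNReal} {g : E → F} (hg : LipschitzWith K g)
    {f : Ω → E} (hf : MemLp f p μ) : MemLp (g ∘ f) p μ := by
  have hg0 : LipschitzWith (K + 0) (fun x => g x - g 0) := hg.sub (LipschitzWith.const (g 0))
  convert (hg0.comp_memLp (sub_self _) hf).add (memLp_const (g 0)) using 1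
  ext; simp

theorem integrable_comp_of_lipschitzWith_deriv {g : ℝ → ℝ} (hg : Differentiable ℝ g)
    {L : NNReal} (hlip : LipschitzWith L (deriv g)) {θ : Ω → ℝ} (hθ : MemLp θ 2 μ) :
    Integrable (fun ω => g (θ ω)) μ := by
  have hdom : Integrable (fun ω => |g 0| + |deriv g 0| * ‖θ ω‖ + L * θ ω ^ 2) μ :=
    ((integrable_const _).add ((hθ.integrable one_le_two).norm.const_mul _)).add
      (hθ.integrable_sq.const_mul _)
  exact hdom.mono' (hg.continuous.comp_aestronglyMeasurable hθ.1)
    (.of_forall fun ω => abs_le_of_lipschitzWith_deriv hg hlip (θ ω))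

theorem abs_integral_comp_add_sub_sub_le {g : ℝ → ℝ} (hg : Differentiable ℝ g)
    {L : NNReal} (hlip : LipschitzWith L (deriv g)) {θ v : Ω → ℝ} (hθ : MemLp θ 2 μ)
    (hv : MemLp v 2 μ) :
    |∫ ω, g (θ ω + v ω) ∂μ - ∫ ω, g (θ ω) ∂μ - ∫ ω, deriv g (θ ω) * v ω ∂μ|
      ≤ L * ∫ ω, v ω ^ 2 ∂μ := by
  have hint_add : Integrable (fun ω => g (θ ω + v ω)) μ :=
    integrable_comp_of_lipschitzWith_deriv hg hlip (hθ.add hv)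
  have hint := integrable_comp_of_lipschitzWith_deriv hg hlip hθ
  have hint_mul : Integrable (fun ω => deriv g (θ ω) * v ω) μ :=
    (hlip.comp_memLp_of_isFiniteMeasure hθ).integrable_mul hv
  have hint_diff : Integrable (fun ω => g (θ ω + v ω) - g (θ ω)) μ := hint_add.sub hint
  rw [← integral_sub hint_add hint, ← integral_sub hint_diff hint_mul, ← integral_const_mul]
  refine abs_integral_le_integral_abs.trans (integral_mono (hint_diff.sub hint_mul).abs
    (hv.integrable_sq.const_mul _) fun ω => ?_)
  simpa using abs_sub_sub_deriv_mul_le_of_lipschitzWith_deriv hg hlip (θ ω) (θ ω + v ω)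

end FiniteMeasure

theorem MeasureTheory.L2.integral_sq_eq_norm_sq {Ω : Type*} [MeasurableSpace Ω] {μ : Measure Ω}
    (v : Lp ℝ 2 μ) : ∫ ω, v ω ^ 2 ∂μ = ‖v‖ ^ 2 := by
  rw [← real_inner_self_eq_norm_sq, L2.inner_def]
  simp [sq]

theorem MeasureTheory.L2.inner_toLp_eq_integral_mul {Ω : Type*} [MeasurableSpace Ω] {μ : Measure Ω}
    {w : Ω → ℝ} (hw : MemLp w 2 μ) (v : Lp ℝ 2 μ) :
    inner ℝ (hw.toLp w) v = ∫ ω, w ω * v ω ∂μ := by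
  rw [L2.inner_def]
  refine integral_congr_ae ?_
  filter_upwards [hw.coeFn_toLp] with ω hω
  rw [Real.inner_apply, hω]

/-- Fréchet differentiability of the lift `Φ̃(ϑ) = 𝔼[g(ϑ)]` on `L²(Ω, ℙ; ℝ)` of the linear
functional `μ ↦ ∫ g dμ`, when `g` is differentiable with Lipschitz derivative: `g(ϑ)` is
integrable for every `ϑ ∈ L²`, and `Φ̃` is Fréchet differentiable at every `ϑ` with derivative
the continuous linear map `v ↦ 𝔼[g'(ϑ) v]`. -/
theorem lift_frechet_differentiable {Ω : Type*} [MeasurableSpace Ω] (P : Measure Ω)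
    [IsProbabilityMeasure P] (g : ℝ → ℝ) (hg : Differentiable ℝ g) (L : NNReal)
    (hlip : LipschitzWith L (deriv g)) :
    ∀ ϑ : Lp ℝ 2 P,
      Integrable (fun ω => g (ϑ ω)) P ∧
      ∃ D : Lp ℝ 2 P →L[ℝ] ℝ,
        (∀ v : Lp ℝ 2 P, D v = ∫ ω, deriv g (ϑ ω) * v ω ∂P) ∧
        HasFDerivAt (fun θ : Lp ℝ 2 P => ∫ ω, g (θ ω) ∂P) D ϑ := by
  intro ϑ
  have hw : MemLp (fun ω => deriv g (ϑ ω)) 2 P := hlip.comp_memLp_of_isFiniteMeasure (Lp.memLp ϑ)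
  set D : Lp ℝ 2 P →L[ℝ] ℝ := innerSL ℝ (hw.toLp _)
  have hD : ∀ v : Lp ℝ 2 P, D v = ∫ ω, deriv g (ϑ ω) * v ω ∂P := L2.inner_toLp_eq_integral_mul hw
  refine ⟨integrable_comp_of_lipschitzWith_deriv hg hlip (Lp.memLp ϑ), D, hD,
    hasFDerivAt_of_norm_sub_sub_le_mul_sq L fun v => ?_⟩
  have hadd : ∫ ω, g ((ϑ + v) ω) ∂P = ∫ ω, g (ϑ ω + v ω) ∂P :=
    integral_congr_ae <| (Lp.coeFn_add ϑ v).mono fun ω hω => congrArg g hω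
  rw [Real.norm_eq_abs, hadd, hD, ← L2.integral_sq_eq_norm_sq]
  exact abs_integral_comp_add_sub_sub_le hg hlip (Lp.memLp ϑ) (Lp.memLp v)
end

section
/- (Interpolation formula along laws.) Fix K > 0. Let Φ : 𝒦_K → ℝ admit a jointly continuous linear derivative F : 𝒦_K × ℝ → ℝ such that for each μ ∈ 𝒦_K the map x ↦ F(μ, x) is continuously differentiable and (μ, x) ↦ ∂_x F(μ, x) is jointly continuous on 𝒦_K × [−K, K]. Let ξ and η be random variables, defined on a common probability space, taking values in [−K, K]. Then, writing ℙ_ζ for the law of a random variable ζ, Φ(ℙ_η) − Φ(ℙ_ξ) = ∫₀¹ 𝔼[ ∂_x F( ℙ_{ξ + h(η − ξ)}, ξ + h(η − ξ) ) · (η − ξ) ] dh. -/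
/-!
Write `μ_t` for the law of `X_t = ξ + t (η - ξ)`. For `a, b ∈ [0, 1]`, the defining identity of the
linear derivative, the fundamental theorem of calculus in the space variable and Fubini give
`Φ(μ_b) - Φ(μ_a) = (b - a) Q_a(b)` with
`Q_a(b) = ∫₀¹ ∫₀¹ 𝔼[∂ₓF(s μ_b + (1 - s) μ_a, X_{a + u (b - a)}) (η - ξ)] du ds`.
By Prokhorov's theorem `𝒦_K` is compact, so `∂ₓF` is bounded on `𝒦_K × [-K, K]` and dominated
convergence makes `Q_a` continuous, with `Q_a(a) = 𝔼[∂ₓF(μ_a, X_a) (η - ξ)]`. Thus `t ↦ Φ(μ_t)` has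
a continuous derivative on `[0, 1]`, and the formula is the fundamental theorem of calculus.
-/

open MeasureTheory

/-- `KK K` is the set of Borel probability measures on `ℝ` whose support is contained in
`[-K, K]`, i.e. which give full mass to `[-K, K]`. -/
def KK (K : ℝ) : Set (ProbabilityMeasure ℝ) :=
  {μ | μ.toMeasure (Set.Icc (-K) K) = 1}

/-- The convex combination `h μ + (1 - h) ν` of two probability measures, for `h ∈ [0, 1]`
(and defined as `μ` for `h ∉ [0, 1]`, which is irrelevant). -/
noncomputable def mix (h : ℝ) (μ ν : ProbabilityMeasure ℝ) : ProbabilityMeasure ℝ :=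
  if hh : 0 ≤ h ∧ h ≤ 1 then
    ⟨ENNReal.ofReal h • μ.toMeasure + ENNReal.ofReal (1 - h) • ν.toMeasure,
      ⟨by
        rw [Measure.add_apply, Measure.smul_apply, Measure.smul_apply,
          measure_univ, measure_univ, smul_eq_mul, smul_eq_mul, mul_one, mul_one,
          ← ENNReal.ofReal_add hh.1 (by linarith : (0 : ℝ) ≤ 1 - h)]
        norm_num⟩⟩
  else μ

/-- `F : 𝒫 × ℝ → ℝ` is a linear derivative of `Φ : 𝒫 → ℝ` on a (convex) set `P` of
probability measures:
`Φ(μ) - Φ(ν) = ∫₀¹ ∫_ℝ F(hμ + (1-h)ν, x) (μ - ν)(dx) dh` for all `μ, ν ∈ P`, where the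
integral against the signed measure `μ - ν` is the difference of the integrals. -/
def IsLinearDerivOn (P : Set (ProbabilityMeasure ℝ))
    (Φ : ProbabilityMeasure ℝ → ℝ) (F : ProbabilityMeasure ℝ → ℝ → ℝ) : Prop :=
  ∀ μ ∈ P, ∀ ν ∈ P,
    Φ μ - Φ ν =
      ∫ h in (0:ℝ)..1,
        ((∫ x, F (mix h μ ν) x ∂μ.toMeasure) - ∫ x, F (mix h μ ν) x ∂ν.toMeasure)

noncomputable def law {Ω : Type*} [MeasurableSpace Ω] (P : Measure Ω) [IsProbabilityMeasure P]
    {f : Ω → ℝ} (hf : Measurable f) : ProbabilityMeasure ℝ :=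
  ⟨P.map f, Measure.isProbabilityMeasure_map hf.aemeasurable⟩

open Set

lemma mix_toMeasure {h : ℝ} (hh : h ∈ Icc (0 : ℝ) 1) (μ ν : ProbabilityMeasure ℝ) :
    (mix h μ ν).toMeasure =
      ENNReal.ofReal h • μ.toMeasure + ENNReal.ofReal (1 - h) • ν.toMeasure := by
  rw [show mix h μ ν = _ from dif_pos hh]
  rfl

lemma mix_self (h : ℝ) (μ : ProbabilityMeasure ℝ) : mix h μ μ = μ := by
  by_cases hh : h ∈ Icc (0 : ℝ) 1
  · apply ProbabilityMeasure.toMeasure_injective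
    rw [mix_toMeasure hh, ← add_smul, ← ENNReal.ofReal_add hh.1 (by linarith [hh.2])]
    simp
  · exact dif_neg hh

lemma mix_mem_KK {K : ℝ} {μ ν : ProbabilityMeasure ℝ} (h : ℝ) (hμ : μ ∈ KK K)
    (hν : ν ∈ KK K) : mix h μ ν ∈ KK K := by
  by_cases hh : h ∈ Icc (0 : ℝ) 1
  · change (mix h μ ν).toMeasure _ = 1
    rw [mix_toMeasure hh, Measure.add_apply, Measure.smul_apply, Measure.smul_apply, hμ, hν,
      smul_eq_mul, smul_eq_mul, mul_one, mul_one, ← ENNReal.ofReal_add hh.1 (by linarith [hh.2])]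
    simp
  · rwa [show mix h μ ν = μ from dif_neg hh]

lemma integral_mix {h : ℝ} (hh : h ∈ Icc (0 : ℝ) 1) (μ ν : ProbabilityMeasure ℝ) {g : ℝ → ℝ}
    (hgμ : Integrable g μ.toMeasure) (hgν : Integrable g ν.toMeasure) :
    ∫ x, g x ∂(mix h μ ν).toMeasure =
      h * ∫ x, g x ∂μ.toMeasure + (1 - h) * ∫ x, g x ∂ν.toMeasure := by
  rw [mix_toMeasure hh, integral_add_measure (hgμ.smul_measure ENNReal.ofReal_ne_top)
    (hgν.smul_measure ENNReal.ofReal_ne_top), integral_smul_measure, integral_smul_measure,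
    ENNReal.toReal_ofReal hh.1, ENNReal.toReal_ofReal (by linarith [hh.2]), smul_eq_mul,
    smul_eq_mul]

lemma continuousOn_mix {X : Type*} [TopologicalSpace X] {s : Set X} {h : X → ℝ}
    {μ ν : X → ProbabilityMeasure ℝ} (hh : ContinuousOn h s) (hμ : ContinuousOn μ s)
    (hν : ContinuousOn ν s) (hmaps : MapsTo h s (Icc 0 1)) :
    ContinuousOn (fun x => mix (h x) (μ x) (ν x)) s := by
  intro x hx
  refine ProbabilityMeasure.tendsto_iff_forall_integral_tendsto.2 fun f => ?_
  have hmix : ∀ y ∈ s, ∫ z, f z ∂(mix (h y) (μ y) (ν y)).toMeasure =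
      h y * ∫ z, f z ∂(μ y).toMeasure + (1 - h y) * ∫ z, f z ∂(ν y).toMeasure :=
    fun y hy => integral_mix (hmaps hy) _ _ (f.integrable _) (f.integrable _)
  have hf := ProbabilityMeasure.continuous_integral_boundedContinuousFunction f
  have hcont : ContinuousOn (fun y => h y * ∫ z, f z ∂(μ y).toMeasure +
      (1 - h y) * ∫ z, f z ∂(ν y).toMeasure) s := (hh.mul (hf.comp_continuousOn hμ)).add
    ((continuousOn_const.sub hh).mul (hf.comp_continuousOn hν))
  rw [hmix x hx]
  exact (hcont x hx).congr' (eventually_nhdsWithin_of_forall fun y hy => (hmix y hy).symm)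

lemma isCompact_KK (K : ℝ) : IsCompact (KK K) := by
  convert isCompact_setOfPred_probabilityMeasure_mass_eq_compl_isCompact_le (u := fun _ => 0)
    (K := fun _ => Icc (-K) K) tendsto_const_nhds (fun _ => isCompact_Icc)
    (Or.inr monotone_const) using 1
  ext μ
  simp [KK]

lemma measurable_of_hasDerivAt {f f' : ℝ → ℝ} (hf : ∀ x, HasDerivAt f (f' x) x) :
    Measurable f' := by
  simpa only [funext fun x => (hf x).deriv] using measurable_deriv f

theorem hasDerivWithinAt_of_sub_eq_mul {g Q : ℝ → ℝ} {s : Set ℝ} {a : ℝ}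
    (hQ : ContinuousWithinAt Q s a) (hg : ∀ b ∈ s, g b - g a = (b - a) * Q b) :
    HasDerivWithinAt g (Q a) s a := by
  rw [hasDerivWithinAt_iff_tendsto_slope]
  refine (hQ.mono sdiff_subset).tendsto.congr' ?_
  filter_upwards [self_mem_nhdsWithin] with b ⟨hb, hba⟩
  rw [slope_def_field, hg b hb, mul_div_cancel_left₀ _ (sub_ne_zero.2 hba)]

theorem sub_eq_mul_integral_unitInterval {f f' : ℝ → ℝ} {x y : ℝ}
    (hf : ∀ z ∈ uIcc x y, HasDerivAt f (f' z) z) (hf' : ContinuousOn f' (uIcc x y)) :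
    f y - f x = (y - x) * ∫ u in (0 : ℝ)..1, f' (x + u * (y - x)) := by
  have hseg : MapsTo (fun u : ℝ => x + u * (y - x)) (Icc 0 1) (uIcc x y) := fun u hu => by
    simpa [smul_eq_mul] using (convex_uIcc x y).add_smul_sub_mem left_mem_uIcc right_mem_uIcc hu
  have := intervalIntegral.integral_unitInterval_deriv_eq_sub (f := f) (f' := f') (z₀ := x)
    (z₁ := y - x)
    (by simp only [smul_eq_mul]; exact hf'.comp (f := fun u => x + u * (y - x)) (by fun_prop) hseg)
    (fun u hu => by simpa only [smul_eq_mul] using hf _ (hseg hu))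
  simpa [smul_eq_mul] using this.symm

theorem integral_eq_sub_of_hasDerivWithinAt_Icc {f f' : ℝ → ℝ} {a b : ℝ} (hab : a ≤ b)
    (hf : ∀ t ∈ Icc a b, HasDerivWithinAt f (f' t) (Icc a b) t)
    (hf' : ContinuousOn f' (Icc a b)) : ∫ t in a..b, f' t = f b - f a :=
  intervalIntegral.integral_eq_sub_of_hasDeriv_right_of_le hab
    (fun t ht => (hf t ht).continuousWithinAt)
    (fun t ht => ((hf t (Ioo_subset_Icc_self ht)).hasDerivAt
      (Icc_mem_nhds ht.1 ht.2)).hasDerivWithinAt)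
    (hf'.intervalIntegrable_of_Icc hab)

theorem continuousOn_parametric_intervalIntegral_of_continuousOn {X E : Type*}
    [TopologicalSpace X] [FirstCountableTopology X] [NormedAddCommGroup E] [NormedSpace ℝ E]
    {f : X → ℝ → E} {s : Set X} (hs : IsCompact s) {a b : ℝ}
    (hf : ContinuousOn (Function.uncurry f) (s ×ˢ uIcc a b)) :
    ContinuousOn (fun x => ∫ t in a..b, f x t) s := by
  obtain ⟨M, hM⟩ := (hs.prod isCompact_uIcc).exists_bound_of_continuousOn hf
  have hslice : ∀ x ∈ s, ContinuousOn (f x) (uIcc a b) := fun x hx =>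
    hf.comp (by fun_prop) fun t ht => mk_mem_prod hx ht
  intro x₀ hx₀
  refine intervalIntegral.continuousWithinAt_of_dominated_interval (bound := fun _ => M)
    ?_ ?_ intervalIntegrable_const ?_
  · filter_upwards [self_mem_nhdsWithin] with x hx
    exact ((hslice x hx).mono uIoc_subset_uIcc).aestronglyMeasurable measurableSet_uIoc
  · filter_upwards [self_mem_nhdsWithin] with x hx
    exact ae_of_all _ fun t ht => hM (x, t) ⟨hx, uIoc_subset_uIcc ht⟩
  · refine ae_of_all _ fun t ht => ?_
    exact (hf (x₀, t) ⟨hx₀, uIoc_subset_uIcc ht⟩).comp (f := fun x => (x, t))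
      (continuousWithinAt_id.prodMk continuousWithinAt_const) fun x hx =>
        ⟨hx, uIoc_subset_uIcc ht⟩

lemma add_mul_sub_mem_Icc {x y a b u : ℝ} (hx : x ∈ Icc a b) (hy : y ∈ Icc a b)
    (hu : u ∈ Icc (0 : ℝ) 1) : x + u * (y - x) ∈ Icc a b := by
  simpa only [smul_eq_mul] using (convex_Icc a b).add_smul_sub_mem hx hy hu

section Interpolant

variable {Ω : Type*}

def interpolant (ξ η : Ω → ℝ) (t : ℝ) (ω : Ω) : ℝ := ξ ω + t * (η ω - ξ ω)

variable {ξ η : Ω → ℝ}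

lemma interpolant_mem_Icc {a b : ℝ} (hξ : ∀ ω, ξ ω ∈ Icc a b) (hη : ∀ ω, η ω ∈ Icc a b)
    {t : ℝ} (ht : t ∈ Icc (0 : ℝ) 1) (ω : Ω) : interpolant ξ η t ω ∈ Icc a b :=
  add_mul_sub_mem_Icc (hξ ω) (hη ω) ht

lemma sub_eq_mul_integral_interpolant {f f' : ℝ → ℝ} (hf : ∀ x, HasDerivAt f (f' x) x)
    {a b : ℝ} {ω : Ω}
    (hf' : ContinuousOn f' (uIcc (interpolant ξ η a ω) (interpolant ξ η b ω))) :
    f (interpolant ξ η b ω) - f (interpolant ξ η a ω) =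
      (b - a) * ∫ u in (0 : ℝ)..1, f' (interpolant ξ η (a + u * (b - a)) ω) * (η ω - ξ ω) := by
  have hline : ∀ u : ℝ, interpolant ξ η a ω + u * (interpolant ξ η b ω - interpolant ξ η a ω) =
      interpolant ξ η (a + u * (b - a)) ω := fun u => by
    simp only [interpolant]; ring
  have hstep : interpolant ξ η b ω - interpolant ξ η a ω = (b - a) * (η ω - ξ ω) := by
    simp only [interpolant]; ring
  rw [sub_eq_mul_integral_unitInterval (fun z _ => hf z) hf', intervalIntegral.integral_mul_const]
  simp only [hline]
  rw [hstep]
  ring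

lemma abs_sub_le_two_mul_of_mem_Icc {K x y : ℝ} (hx : x ∈ Icc (-K) K) (hy : y ∈ Icc (-K) K) :
    |y - x| ≤ 2 * K :=
  abs_sub_le_iff.2 ⟨by linarith [hx.1, hy.2], by linarith [hx.2, hy.1]⟩

end Interpolant

section LawPath

variable {Ω : Type*} [MeasurableSpace Ω] (P : Measure Ω) [IsProbabilityMeasure P]

lemma integral_law {f : Ω → ℝ} (hf : Measurable f) {g : ℝ → ℝ}
    (hg : AEStronglyMeasurable g (P.map f)) :
    ∫ x, g x ∂(law P hf).toMeasure = ∫ ω, g (f ω) ∂P :=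
  integral_map hf.aemeasurable hg

lemma law_mem_KK {K : ℝ} {f : Ω → ℝ} (hf : Measurable f) (hfK : ∀ ω, f ω ∈ Icc (-K) K) :
    law P hf ∈ KK K := by
  change P.map f (Icc (-K) K) = 1
  have hpre : f ⁻¹' Icc (-K) K = univ := eq_univ_of_forall hfK
  rw [Measure.map_apply hf measurableSet_Icc, hpre, measure_univ]

lemma continuous_law {T : Type*} [TopologicalSpace T] [FirstCountableTopology T]
    {X : T → Ω → ℝ} (hX : ∀ t, Measurable (X t)) (hcont : ∀ ω, Continuous fun t => X t ω) :
    Continuous fun t => law P (hX t) := by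
  refine ProbabilityMeasure.continuous_iff_forall_continuous_integral.2 fun g => ?_
  simp only [integral_law P (hX _) g.continuous.aestronglyMeasurable]
  exact continuous_of_dominated (bound := fun _ => ‖g‖)
    (fun t => (g.continuous.measurable.comp (hX t)).aestronglyMeasurable)
    (fun t => ae_of_all _ fun ω => g.norm_coe_le_norm _) (integrable_const _)
    (ae_of_all _ fun ω => g.continuous.comp (hcont ω))

variable {ξ η : Ω → ℝ}

lemma measurable_interpolant (hξ : Measurable ξ) (hη : Measurable η) (t : ℝ) :
    Measurable (interpolant ξ η t) :=
  hξ.add ((hη.sub hξ).const_mul t)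

noncomputable def lawPath (hξ : Measurable ξ) (hη : Measurable η) (t : ℝ) :
    ProbabilityMeasure ℝ :=
  law P (measurable_interpolant hξ hη t)

variable {P}

lemma continuous_lawPath (hξ : Measurable ξ) (hη : Measurable η) :
    Continuous (lawPath P hξ hη) :=
  continuous_law P _ fun ω => by unfold interpolant; fun_prop

lemma lawPath_mem_KK {K : ℝ} (hξ : Measurable ξ) (hη : Measurable η)
    (hξK : ∀ ω, ξ ω ∈ Icc (-K) K) (hηK : ∀ ω, η ω ∈ Icc (-K) K) {t : ℝ}
    (ht : t ∈ Icc (0 : ℝ) 1) : lawPath P hξ hη t ∈ KK K :=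
  law_mem_KK P _ (interpolant_mem_Icc hξK hηK ht)

lemma lawPath_zero (hξ : Measurable ξ) (hη : Measurable η) :
    lawPath P hξ hη 0 = law P hξ := by
  apply ProbabilityMeasure.toMeasure_injective
  change P.map (interpolant ξ η 0) = P.map ξ
  congr 1
  ext ω
  simp [interpolant]

lemma lawPath_one (hξ : Measurable ξ) (hη : Measurable η) :
    lawPath P hξ hη 1 = law P hη := by
  apply ProbabilityMeasure.toMeasure_injective
  change P.map (interpolant ξ η 1) = P.map η
  congr 1
  ext ω
  simp [interpolant]

variable (P ξ η) in
noncomputable def expectedDerivAlong (g : ℝ → ℝ) (t : ℝ) : ℝ :=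
  ∫ ω, g (interpolant ξ η t ω) * (η ω - ξ ω) ∂P

lemma continuousOn_expectedDerivAlong {K : ℝ} (hξ : Measurable ξ) (hη : Measurable η)
    (hξK : ∀ ω, ξ ω ∈ Icc (-K) K) (hηK : ∀ ω, η ω ∈ Icc (-K) K)
    {Y : Type*} [TopologicalSpace Y] [FirstCountableTopology Y] {S : Set Y} (hS : IsCompact S)
    {G : Y → ℝ → ℝ} (hGm : ∀ y ∈ S, Measurable (G y))
    (hG : ContinuousOn (Function.uncurry G) (S ×ˢ Icc (-K) K)) :
    ContinuousOn (fun q : Y × ℝ => expectedDerivAlong P ξ η (G q.1) q.2) (S ×ˢ Icc 0 1) := by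
  obtain ⟨M, hM⟩ := (hS.prod isCompact_Icc).exists_bound_of_continuousOn hG
  refine continuousOn_of_dominated (bound := fun _ => M * (2 * K)) (fun q hq => ?_)
    (fun q hq => ae_of_all _ fun ω => ?_) (integrable_const _) (ae_of_all _ fun ω => ?_)
  · exact (((hGm q.1 hq.1).comp (measurable_interpolant hξ hη q.2)).mul
      (hη.sub hξ)).aestronglyMeasurable
  · rw [norm_mul, Real.norm_eq_abs (η ω - ξ ω)]
    have hGq := hM (q.1, interpolant ξ η q.2 ω) ⟨hq.1, interpolant_mem_Icc hξK hηK hq.2 ω⟩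
    exact mul_le_mul hGq (abs_sub_le_two_mul_of_mem_Icc (hξK ω) (hηK ω)) (abs_nonneg _)
      ((norm_nonneg _).trans hGq)
  · refine ContinuousOn.mul ?_ continuousOn_const
    refine hG.comp (f := fun q : Y × ℝ => (q.1, interpolant ξ η q.2 ω)) ?_ ?_
    · unfold interpolant; fun_prop
    · exact fun q hq => ⟨hq.1, interpolant_mem_Icc hξK hηK hq.2 ω⟩

lemma integrable_uncurry_comp_interpolant_mul {K : ℝ} (hξ : Measurable ξ) (hη : Measurable η)
    (hξK : ∀ ω, ξ ω ∈ Icc (-K) K) (hηK : ∀ ω, η ω ∈ Icc (-K) K) {f' : ℝ → ℝ}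
    (hf'm : Measurable f') (hf' : ContinuousOn f' (Icc (-K) K)) {a b : ℝ}
    (ha : a ∈ Icc (0 : ℝ) 1) (hb : b ∈ Icc (0 : ℝ) 1) :
    Integrable (Function.uncurry fun u ω =>
        f' (interpolant ξ η (a + u * (b - a)) ω) * (η ω - ξ ω))
      ((volume.restrict (uIoc 0 1)).prod P) := by
  obtain ⟨M, hM⟩ := isCompact_Icc.exists_bound_of_continuousOn hf'
  have hmem : ∀ᵐ p ∂(volume.restrict (uIoc (0 : ℝ) 1)).prod P, p.1 ∈ uIoc (0 : ℝ) 1 := by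
    rw [Measure.restrict_prod_eq_prod_univ]
    filter_upwards [ae_restrict_mem (measurableSet_uIoc.prod MeasurableSet.univ)] with p hp
    exact hp.1
  have : IsFiniteMeasure (volume.restrict (uIoc (0 : ℝ) 1)) :=
    isFiniteMeasure_restrict.2 (by simp)
  refine Integrable.of_bound ?_ (M * (2 * K)) ?_
  · refine ((hf'm.comp ?_).mul ?_).aestronglyMeasurable
    · simp only [interpolant]; fun_prop
    · fun_prop
  · filter_upwards [hmem] with p hp
    rw [uIoc_of_le zero_le_one] at hp
    have hf'p := hM _ (interpolant_mem_Icc hξK hηK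
      (add_mul_sub_mem_Icc ha hb (Ioc_subset_Icc_self hp)) p.2)
    rw [Function.uncurry_apply_pair, norm_mul, Real.norm_eq_abs (η p.2 - ξ p.2)]
    exact mul_le_mul hf'p (abs_sub_le_two_mul_of_mem_Icc (hξK p.2) (hηK p.2)) (abs_nonneg _)
      ((norm_nonneg _).trans hf'p)

lemma integral_sub_integral_lawPath {K : ℝ} (hξ : Measurable ξ) (hη : Measurable η)
    (hξK : ∀ ω, ξ ω ∈ Icc (-K) K) (hηK : ∀ ω, η ω ∈ Icc (-K) K) {f f' : ℝ → ℝ}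
    (hf : ∀ x, HasDerivAt f (f' x) x) (hf' : ContinuousOn f' (Icc (-K) K)) {a b : ℝ}
    (ha : a ∈ Icc (0 : ℝ) 1) (hb : b ∈ Icc (0 : ℝ) 1) :
    ∫ x, f x ∂(lawPath P hξ hη b).toMeasure - ∫ x, f x ∂(lawPath P hξ hη a).toMeasure =
      (b - a) * ∫ u in (0 : ℝ)..1, expectedDerivAlong P ξ η f' (a + u * (b - a)) := by
  have hfcont : Continuous f := continuous_iff_continuousAt.2 fun x => (hf x).continuousAt
  obtain ⟨C, hC⟩ := isCompact_Icc.exists_bound_of_continuousOn hfcont.continuousOn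
  have hint : ∀ t ∈ Icc (0 : ℝ) 1, Integrable (fun ω => f (interpolant ξ η t ω)) P :=
    fun t ht => Integrable.of_bound
      (hfcont.measurable.comp (measurable_interpolant hξ hη t)).aestronglyMeasurable C
      (ae_of_all _ fun ω => hC _ (interpolant_mem_Icc hξK hηK ht ω))
  have hftc : ∀ ω, f (interpolant ξ η b ω) - f (interpolant ξ η a ω) = (b - a) *
      ∫ u in (0 : ℝ)..1, f' (interpolant ξ η (a + u * (b - a)) ω) * (η ω - ξ ω) := fun ω =>
    sub_eq_mul_integral_interpolant hf (hf'.mono (uIcc_subset_Icc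
      (interpolant_mem_Icc hξK hηK ha ω) (interpolant_mem_Icc hξK hηK hb ω)))
  calc ∫ x, f x ∂(lawPath P hξ hη b).toMeasure - ∫ x, f x ∂(lawPath P hξ hη a).toMeasure
      = ∫ ω, f (interpolant ξ η b ω) ∂P - ∫ ω, f (interpolant ξ η a ω) ∂P := by
        rw [lawPath, lawPath, integral_law P _ hfcont.aestronglyMeasurable,
          integral_law P _ hfcont.aestronglyMeasurable]
    _ = ∫ ω, (f (interpolant ξ η b ω) - f (interpolant ξ η a ω)) ∂P :=
        (integral_sub (hint b hb) (hint a ha)).symm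
    _ = (b - a) * ∫ ω, (∫ u in (0 : ℝ)..1,
          f' (interpolant ξ η (a + u * (b - a)) ω) * (η ω - ξ ω)) ∂P := by
        simp_rw [hftc]; exact integral_const_mul _ _
    _ = (b - a) * ∫ u in (0 : ℝ)..1, expectedDerivAlong P ξ η f' (a + u * (b - a)) := by
        rw [← intervalIntegral_integral_swap (integrable_uncurry_comp_interpolant_mul hξ hη hξK hηK
          (measurable_of_hasDerivAt hf) hf' ha hb)]
        rfl

end LawPath

theorem hasDerivWithinAt_comp_lawPath {Ω : Type*} [MeasurableSpace Ω] {P : Measure Ω}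
    [IsProbabilityMeasure P] {K : ℝ} {Φ : ProbabilityMeasure ℝ → ℝ}
    {F F₁ : ProbabilityMeasure ℝ → ℝ → ℝ} (hlin : IsLinearDerivOn (KK K) Φ F)
    (hF1 : ∀ μ ∈ KK K, ∀ x : ℝ, HasDerivAt (F μ) (F₁ μ x) x)
    (hF1cont : ContinuousOn (fun q : ProbabilityMeasure ℝ × ℝ => F₁ q.1 q.2)
      (KK K ×ˢ Icc (-K) K))
    {ξ η : Ω → ℝ} (hξ : Measurable ξ) (hη : Measurable η)
    (hξK : ∀ ω, ξ ω ∈ Icc (-K) K) (hηK : ∀ ω, η ω ∈ Icc (-K) K) {a : ℝ}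
    (ha : a ∈ Icc (0 : ℝ) 1) :
    HasDerivWithinAt (fun t => Φ (lawPath P hξ hη t))
      (expectedDerivAlong P ξ η (F₁ (lawPath P hξ hη a)) a) (Icc 0 1) a := by
  set μ := lawPath P hξ hη
  have hμK : ∀ t ∈ Icc (0 : ℝ) 1, μ t ∈ KK K := fun t ht => lawPath_mem_KK hξ hη hξK hηK ht
  have hΨ := continuousOn_expectedDerivAlong (P := P) hξ hη hξK hηK (isCompact_KK K)
    (fun ν hν => measurable_of_hasDerivAt (hF1 ν hν)) hF1cont
  set Q : ℝ → ℝ := fun b => ∫ s in (0 : ℝ)..1, ∫ u in (0 : ℝ)..1,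
    expectedDerivAlong P ξ η (F₁ (mix s (μ b) (μ a))) (a + u * (b - a))
  have hinner : ContinuousOn (fun p : ℝ × ℝ => ∫ u in (0 : ℝ)..1,
      expectedDerivAlong P ξ η (F₁ (mix p.2 (μ p.1) (μ a))) (a + u * (p.1 - a)))
      (Icc 0 1 ×ˢ Icc 0 1) := by
    refine continuousOn_parametric_intervalIntegral_of_continuousOn
      (isCompact_Icc.prod isCompact_Icc) ?_
    rw [uIcc_of_le zero_le_one]
    refine hΨ.comp (f := fun q : (ℝ × ℝ) × ℝ => (mix q.1.2 (μ q.1.1) (μ a), a + q.2 * (q.1.1 - a)))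
      (ContinuousOn.prodMk ?_ (by fun_prop)) fun q hq =>
        ⟨mix_mem_KK _ (hμK _ hq.1.1) (hμK a ha), add_mul_sub_mem_Icc ha hq.1.1 hq.2⟩
    exact continuousOn_mix (by fun_prop)
      ((continuous_lawPath hξ hη).comp_continuousOn (by fun_prop)) continuousOn_const
      fun q hq => hq.1.2
  have hQ : ContinuousOn Q (Icc 0 1) := by
    refine continuousOn_parametric_intervalIntegral_of_continuousOn isCompact_Icc ?_
    rw [uIcc_of_le zero_le_one]
    exact hinner
  have hQa : Q a = expectedDerivAlong P ξ η (F₁ (μ a)) a := by simp [Q, mix_self]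
  refine hQa ▸ hasDerivWithinAt_of_sub_eq_mul (hQ a ha) fun b hb => ?_
  rw [hlin _ (hμK b hb) _ (hμK a ha), ← intervalIntegral.integral_const_mul]
  refine intervalIntegral.integral_congr fun s hs => ?_
  have hν := mix_mem_KK s (hμK b hb) (hμK a ha)
  exact integral_sub_integral_lawPath hξ hη hξK hηK (hF1 _ hν)
    (hF1cont.comp (f := fun x => (mix s (μ b) (μ a), x)) (by fun_prop) fun x hx => ⟨hν, hx⟩)
    ha hb

theorem interpolation_along_laws_general {Ω : Type*} [MeasurableSpace Ω] (P : Measure Ω)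
    [IsProbabilityMeasure P] (K : ℝ)
    (Φ : ProbabilityMeasure ℝ → ℝ) (F F₁ : ProbabilityMeasure ℝ → ℝ → ℝ)
    (hlin : IsLinearDerivOn (KK K) Φ F)
    (hF1 : ∀ μ ∈ KK K, ∀ x : ℝ, HasDerivAt (F μ) (F₁ μ x) x)
    (hF1cont : ContinuousOn (fun q : ProbabilityMeasure ℝ × ℝ => F₁ q.1 q.2)
      (KK K ×ˢ Set.Icc (-K) K))
    (ξ η : Ω → ℝ) (hξ : Measurable ξ) (hη : Measurable η)
    (hξK : ∀ ω, ξ ω ∈ Set.Icc (-K) K) (hηK : ∀ ω, η ω ∈ Set.Icc (-K) K) :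
    Φ (law P hη) - Φ (law P hξ) =
      ∫ h in (0:ℝ)..1,
        ∫ ω, F₁ (law P (hξ.add ((hη.sub hξ).const_mul h)))
            (ξ ω + h * (η ω - ξ ω)) * (η ω - ξ ω) ∂P := by
  have hcont : ContinuousOn (fun t => expectedDerivAlong P ξ η (F₁ (lawPath P hξ hη t)) t)
      (Icc 0 1) :=
    (continuousOn_expectedDerivAlong (P := P) hξ hη hξK hηK (isCompact_KK K)
      (fun ν hν => measurable_of_hasDerivAt (hF1 ν hν)) hF1cont).comp
      ((continuous_lawPath hξ hη).continuousOn.prodMk continuousOn_id)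
      fun t ht => ⟨lawPath_mem_KK hξ hη hξK hηK ht, ht⟩
  rw [← lawPath_one (P := P) hξ hη, ← lawPath_zero (P := P) hξ hη]
  exact (integral_eq_sub_of_hasDerivWithinAt_Icc zero_le_one
    (fun t ht => hasDerivWithinAt_comp_lawPath hlin hF1 hF1cont hξ hη hξK hηK ht) hcont).symm

/-- Interpolation formula along laws: if `Φ : 𝒦_K → ℝ` admits a jointly continuous linear
derivative `F` which is `C¹` in the space variable with jointly continuous space-derivative
`F₁ = ∂_x F` on `𝒦_K × [-K, K]`, and `ξ, η` are random variables on a common probability space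
taking values in `[-K, K]`, then
`Φ(ℙ_η) - Φ(ℙ_ξ) = ∫₀¹ 𝔼[ ∂_x F(ℙ_{ξ + h(η - ξ)}, ξ + h(η - ξ)) · (η - ξ) ] dh`. -/
theorem interpolation_along_laws {Ω : Type*} [MeasurableSpace Ω] (P : Measure Ω)
    [IsProbabilityMeasure P] (K : ℝ) (hK : 0 < K)
    (Φ : ProbabilityMeasure ℝ → ℝ) (F F₁ : ProbabilityMeasure ℝ → ℝ → ℝ)
    (hlin : IsLinearDerivOn (KK K) Φ F)
    (hFcont : ContinuousOn (fun q : ProbabilityMeasure ℝ × ℝ => F q.1 q.2)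
      (KK K ×ˢ Set.univ))
    (hF1 : ∀ μ ∈ KK K, ∀ x : ℝ, HasDerivAt (F μ) (F₁ μ x) x)
    (hF1cont : ContinuousOn (fun q : ProbabilityMeasure ℝ × ℝ => F₁ q.1 q.2)
      (KK K ×ˢ Set.Icc (-K) K))
    (ξ η : Ω → ℝ) (hξ : Measurable ξ) (hη : Measurable η)
    (hξK : ∀ ω, ξ ω ∈ Set.Icc (-K) K) (hηK : ∀ ω, η ω ∈ Set.Icc (-K) K) :
    Φ (law P hη) - Φ (law P hξ) =
      ∫ h in (0:ℝ)..1,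
        ∫ ω, F₁ (law P (hξ.add ((hη.sub hξ).const_mul h)))
            (ξ ω + h * (η ω - ξ ω)) * (η ω - ξ ω) ∂P :=
  interpolation_along_laws_general P K Φ F F₁ hlin hF1 hF1cont ξ η hξ hη hξK hηK
end
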